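/- (Lemma 6.10(3) of the paper) Let f ∈ F̃' and let g, h ∈ F̃ satisfy h∘g = (u_1,…,u_{n−1}) (the identity tuple, composition taken modulo I^k). Then π(h∘f∘g) = χ(h)∘π(f)∘χ(g) — the tuple obtained by substituting the linear tuple χ(g) into π(f) and then substituting the result into the linear tuple χ(h) — and moreover h∘f∘g ∈ F̃'. -/

import Mathlib

/-- Truncation modulo `I^k`: the sum of the homogeneous components of degree `< k`
(`I` being the ideal of polynomials with zero constant term). -/
noncomputable def truncLT {A : Type*} [CommRing A] {σ : Type*} (k : ℕ)
    (p : MvPolynomial σ A) : MvPolynomial σ A :=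
  ∑ d ∈ Finset.range k, MvPolynomial.homogeneousComponent d p

/-- Composition of tuples of polynomials modulo `I^k`: substitute the tuple `g`
for the variables in `f`, then delete all monomials of total degree `≥ k`. -/
noncomputable def polyComp {A : Type*} [CommRing A] {σ : Type*} (k : ℕ)
    (f g : σ → MvPolynomial σ A) : σ → MvPolynomial σ A :=
  fun i => truncLT k (MvPolynomial.bind₁ g (f i))

/-- `f ∈ F̃`: each component has zero constant term and total degree `≤ k − 1`. -/
def memFtilde {A : Type*} [CommRing A] {σ : Type*} (k : ℕ)
    (f : σ → MvPolynomial σ A) : Prop :=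
  ∀ i, MvPolynomial.coeff 0 (f i) = 0 ∧ (f i).totalDegree ≤ k - 1

/-- `χ(f)`: the tuple of degree-1 homogeneous components. -/
noncomputable def chiLin {A : Type*} [CommRing A] {σ : Type*}
    (f : σ → MvPolynomial σ A) : σ → MvPolynomial σ A :=
  fun i => MvPolynomial.homogeneousComponent 1 (f i)

/-- `π(f)`: the tuple of degree-(k−1) homogeneous components. -/
noncomputable def piTop {A : Type*} [CommRing A] {σ : Type*} (k : ℕ)
    (f : σ → MvPolynomial σ A) : σ → MvPolynomial σ A :=
  fun i => MvPolynomial.homogeneousComponent (k - 1) (f i)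

/-- `f ∈ F̃'`: `f ∈ F̃` and `f(u) = u + π(f)(u)`. -/
def memFtilde' {A : Type*} [CommRing A] {σ : Type*} (k : ℕ)
    (f : σ → MvPolynomial σ A) : Prop :=
  memFtilde k f ∧ ∀ i, f i - MvPolynomial.homogeneousComponent (k - 1) (f i) =
    MvPolynomial.X i

/-!
Write `f = X + P` with `P = π(f)` homogeneous of degree `k - 1`, and `g = χ(g) + O(I²)`.
Substituting `g` instead of `χ(g)` into `P` changes the result only in `I^k`, so
`f ∘ g = g + P ∘ χ(g)`. Substituting `g + B` with `B ∈ I^(k-1)` into `h = χ(h) + O(I²)` gives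
`h ∘ g + χ(h) ∘ B` modulo `I^k`, hence `h ∘ f ∘ g = X + χ(h) ∘ P ∘ χ(g)`, whose component of
degree `k - 1` is the second summand once `k ≥ 3`. For `k ≤ 2` the equation `f - π(f) = X` forces
`X = 0`, so the coefficient ring is zero (or there are no variables).

Both congruences are instances of one estimate: ring maps that send `I` into `J` and agree modulo
`J^a` on `I` agree modulo `J^(m+a)` on `I^(m+1)`.
-/

open MvPolynomial

theorem map_sub_map_mem_pow_add {R S : Type*} [CommRing R] [CommRing S] {φ ψ : R →+* S}
    {I : Ideal R} {J : Ideal S} {a : ℕ} (hφ : I.map φ ≤ J) (hψ : I.map ψ ≤ J)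
    (hI : ∀ x ∈ I, φ x - ψ x ∈ J ^ a) (m : ℕ) :
    ∀ x ∈ I ^ (m + 1), φ x - ψ x ∈ J ^ (m + a) := by
  induction m with
  | zero => simpa using hI
  | succ m ih =>
    intro x hx
    rw [pow_succ'] at hx
    refine Submodule.mul_induction_on hx (fun x hx y hy => ?_) (fun x y hx hy => ?_)
    · have hψy : ψ y ∈ J ^ (m + 1) :=
        Ideal.pow_right_mono hψ _ (Ideal.map_pow ψ I _ ▸ Ideal.mem_map_of_mem ψ hy)
      have hxy : φ (x * y) - ψ (x * y) = φ x * (φ y - ψ y) + (φ x - ψ x) * ψ y := by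
        simp only [map_mul]; ring
      rw [hxy]
      refine add_mem ?_ ?_
      · have := Ideal.mul_mem_mul (hφ (Ideal.mem_map_of_mem φ hx)) (ih y hy)
        rwa [← pow_succ', add_right_comm] at this
      · have := Ideal.mul_mem_mul (hI x hx) hψy
        rwa [← pow_add, add_comm] at this
    · simpa only [map_add, add_sub_add_comm] using add_mem hx hy

namespace MvPolynomial

variable {A σ τ : Type*} [CommRing A]

theorem bind₁_sub_bind₁_mem {u v : σ → MvPolynomial τ A} {K : Ideal (MvPolynomial τ A)}
    (h : ∀ j, u j - v j ∈ K) (p : MvPolynomial σ A) : bind₁ u p - bind₁ v p ∈ K := by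
  rw [← Ideal.Quotient.eq]
  change (Ideal.Quotient.mkₐ A K).comp (bind₁ u) p = (Ideal.Quotient.mkₐ A K).comp (bind₁ v) p
  congr 1
  ext j
  simpa [Ideal.Quotient.eq] using h j

theorem map_bind₁_idealOfVars_le {u : σ → MvPolynomial τ A} {K : Ideal (MvPolynomial τ A)}
    (h : ∀ j, u j ∈ K) : (idealOfVars σ A).map (bind₁ u) ≤ K := by
  rw [Ideal.map_span, Ideal.span_le]
  rintro _ ⟨_, ⟨j, rfl⟩, rfl⟩
  simpa using h j

theorem bind₁_sub_bind₁_mem_pow_add {u v : σ → MvPolynomial τ A}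
    {J : Ideal (MvPolynomial τ A)} {a : ℕ} (hu : ∀ j, u j ∈ J) (hv : ∀ j, v j ∈ J)
    (huv : ∀ j, u j - v j ∈ J ^ a) (m : ℕ) {p : MvPolynomial σ A}
    (hp : p ∈ idealOfVars σ A ^ (m + 1)) : bind₁ u p - bind₁ v p ∈ J ^ (m + a) :=
  map_sub_map_mem_pow_add (φ := (bind₁ u).toRingHom) (ψ := (bind₁ v).toRingHom)
    (map_bind₁_idealOfVars_le hu) (map_bind₁_idealOfVars_le hv)
    (fun x _ => bind₁_sub_bind₁_mem huv x) m p hp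

theorem bind₁_add_of_isHomogeneous_one (u v : σ → MvPolynomial τ A) {p : MvPolynomial σ A}
    (hp : p.IsHomogeneous 1) : bind₁ (u + v) p = bind₁ u p + bind₁ v p := by
  rw [← mem_homogeneousSubmodule, homogeneousSubmodule_one_eq_span_X] at hp
  induction hp using Submodule.span_induction with
  | mem _ hx => obtain ⟨j, rfl⟩ := hx; simp
  | zero => simp
  | add x y _ _ hx hy => simp only [map_add, hx, hy]; ring
  | smul c x _ hx => simp only [map_smul, hx, smul_add]

theorem mem_idealOfVars_of_coeff_zero {p : MvPolynomial σ A} (hp : coeff 0 p = 0) :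
    p ∈ idealOfVars σ A := by
  rw [← pow_one (idealOfVars σ A), mem_pow_idealOfVars_iff']
  intro d hd
  rwa [(Finsupp.degree_eq_zero_iff d).mp (by omega)]

theorem IsHomogeneous.mem_pow_idealOfVars {p : MvPolynomial σ A} {n : ℕ}
    (hp : p.IsHomogeneous n) : p ∈ idealOfVars σ A ^ n := by
  rw [mem_pow_idealOfVars_iff]
  intro d hd
  rw [Finsupp.degree_eq_weight_one]
  exact (hp (mem_support_iff.mp hd)).ge

theorem sub_homogeneousComponent_one_mem_pow_two {p : MvPolynomial σ A} (hp : coeff 0 p = 0) :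
    p - homogeneousComponent 1 p ∈ idealOfVars σ A ^ 2 := by
  rw [mem_pow_idealOfVars_iff']
  intro d hd
  rw [coeff_sub, coeff_homogeneousComponent]
  split_ifs with h1
  · exact sub_self _
  · rwa [sub_zero, (Finsupp.degree_eq_zero_iff d).mp (by omega)]

end MvPolynomial

section Truncation

open Finset

variable {A σ : Type*} [CommRing A]

theorem truncLT_add (k : ℕ) (p q : MvPolynomial σ A) :
    truncLT k (p + q) = truncLT k p + truncLT k q := by
  simp only [truncLT, map_add, sum_add_distrib]

theorem truncLT_eq_self_of_totalDegree_lt {k : ℕ} {p : MvPolynomial σ A}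
    (hp : p.totalDegree < k) : truncLT k p = p := by
  conv_rhs => rw [← sum_homogeneousComponent p]
  refine (sum_subset (range_subset_range.mpr hp) fun d _ hd => ?_).symm
  exact homogeneousComponent_eq_zero _ _ (by simpa using hd)

theorem truncLT_eq_zero_of_mem_pow {k : ℕ} {p : MvPolynomial σ A}
    (hp : p ∈ idealOfVars σ A ^ k) : truncLT k p = 0 := by
  refine sum_eq_zero fun d hd => homogeneousComponent_eq_zero' _ _ fun e he => ?_
  have := (mem_pow_idealOfVars_iff k p).mp hp e he
  rw [mem_range] at hd
  omega

theorem truncLT_add_of_mem_pow {k : ℕ} (p : MvPolynomial σ A) {q : MvPolynomial σ A}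
    (hq : q ∈ idealOfVars σ A ^ k) : truncLT k (p + q) = truncLT k p := by
  rw [truncLT_add, truncLT_eq_zero_of_mem_pow hq, add_zero]

end Truncation

section Composition

variable {A σ : Type*} [CommRing A]

theorem MvPolynomial.IsHomogeneous.bind₁_chiLin {m : ℕ} {p : MvPolynomial σ A}
    (hp : p.IsHomogeneous m) (g : σ → MvPolynomial σ A) : (bind₁ (chiLin g) p).IsHomogeneous m := by
  simpa using hp.aeval (chiLin g) fun j => homogeneousComponent_isHomogeneous 1 (g j)

theorem isHomogeneous_bind₁_chiLin_apply {m : ℕ} {B : σ → MvPolynomial σ A}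
    (hB : ∀ j, (B j).IsHomogeneous m) (h : σ → MvPolynomial σ A) (i : σ) :
    (bind₁ B (chiLin h i)).IsHomogeneous m := by
  have := (homogeneousComponent_isHomogeneous 1 (h i)).aeval B hB
  rwa [mul_one] at this

theorem polyComp_eq_add_bind₁_piTop {k : ℕ} (hk : 2 ≤ k) {f g : σ → MvPolynomial σ A}
    (hf : memFtilde' k f) (hg : memFtilde k g) :
    polyComp k f g = g + fun j => bind₁ (chiLin g) (piTop k f j) := by
  funext j
  have hP : (piTop k f j).IsHomogeneous (k - 1) := homogeneousComponent_isHomogeneous _ _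
  have hB := hP.bind₁_chiLin g
  have hdiff : bind₁ g (piTop k f j) - bind₁ (chiLin g) (piTop k f j) ∈ idealOfVars σ A ^ k := by
    have := bind₁_sub_bind₁_mem_pow_add (a := 2)
      (fun j => mem_idealOfVars_of_coeff_zero (hg j).1)
      (fun j => by simpa using (homogeneousComponent_isHomogeneous 1 (g j)).mem_pow_idealOfVars)
      (fun j => sub_homogeneousComponent_one_mem_pow_two (hg j).1) (k - 2)
      (p := piTop k f j) (by rw [show k - 2 + 1 = k - 1 by omega]; exact hP.mem_pow_idealOfVars)
    rwa [show k - 2 + 2 = k by omega] at this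
  have hsplit : bind₁ g (f j) = (g j + bind₁ (chiLin g) (piTop k f j))
      + (bind₁ g (piTop k f j) - bind₁ (chiLin g) (piTop k f j)) := by
    rw [sub_eq_iff_eq_add'.mp (hf.2 j), map_add, bind₁_X_right]
    simp only [piTop]
    ring
  simp only [polyComp, Pi.add_apply]
  rw [hsplit, truncLT_add_of_mem_pow _ hdiff, truncLT_eq_self_of_totalDegree_lt]
  exact (totalDegree_add _ _).trans_lt (max_lt ((hg j).2.trans_lt (by omega))
    (hB.totalDegree_le.trans_lt (by omega)))

theorem polyComp_add_of_isHomogeneous {k : ℕ} (hk : 2 ≤ k) {h g B : σ → MvPolynomial σ A}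
    (hh : ∀ i, coeff 0 (h i) = 0) (hg : ∀ j, coeff 0 (g j) = 0)
    (hB : ∀ j, (B j).IsHomogeneous (k - 1)) :
    polyComp k h (g + B) = polyComp k h g + fun i => bind₁ B (chiLin h i) := by
  funext i
  have hH : (chiLin h i).IsHomogeneous 1 := homogeneousComponent_isHomogeneous _ _
  have hQ := isHomogeneous_bind₁_chiLin_apply hB h i
  have hdiff : bind₁ (g + B) (h i - chiLin h i) - bind₁ g (h i - chiLin h i)
      ∈ idealOfVars σ A ^ k := by
    have := bind₁_sub_bind₁_mem_pow_add (a := k - 1)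
      (fun j => add_mem (mem_idealOfVars_of_coeff_zero (hg j))
        (Ideal.pow_le_self (by omega) (hB j).mem_pow_idealOfVars))
      (fun j => mem_idealOfVars_of_coeff_zero (hg j))
      (fun j => by simpa using (hB j).mem_pow_idealOfVars) 1
      (sub_homogeneousComponent_one_mem_pow_two (hh i))
    rwa [show 1 + (k - 1) = k by omega] at this
  have hsplit : bind₁ (g + B) (h i) = (bind₁ g (h i) + bind₁ B (chiLin h i))
      + (bind₁ (g + B) (h i - chiLin h i) - bind₁ g (h i - chiLin h i)) := by
    rw [map_sub, map_sub, bind₁_add_of_isHomogeneous_one _ _ hH]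
    ring
  simp only [polyComp, Pi.add_apply]
  rw [hsplit, truncLT_add_of_mem_pow _ hdiff, truncLT_add,
    truncLT_eq_self_of_totalDegree_lt (hQ.totalDegree_le.trans_lt (by omega))]

theorem piTop_X_add {k : ℕ} (hk : 3 ≤ k) {Q : σ → MvPolynomial σ A}
    (hQ : ∀ i, (Q i).IsHomogeneous (k - 1)) : piTop k (X + Q) = Q := by
  funext i
  rw [piTop, Pi.add_apply, map_add, homogeneousComponent_of_mem (isHomogeneous_X A i),
    if_neg (by omega), homogeneousComponent_eq_self (hQ i), zero_add]

theorem memFtilde'_X_add {k : ℕ} (hk : 3 ≤ k) {Q : σ → MvPolynomial σ A}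
    (hQ : ∀ i, (Q i).IsHomogeneous (k - 1)) : memFtilde' k (X + Q) := by
  refine ⟨fun i => ⟨?_, ?_⟩, fun i => ?_⟩
  · rw [Pi.add_apply, coeff_add, coeff_zero_X, (hQ i).coeff_eq_zero (by simp; omega), add_zero]
  · exact (totalDegree_add _ _).trans
      (max_le ((isHomogeneous_X A i).totalDegree_le.trans (by omega)) (hQ i).totalDegree_le)
  · rw [← piTop, piTop_X_add hk hQ, Pi.add_apply, add_sub_cancel_right]

theorem subsingleton_of_memFtilde' {k : ℕ} (hk : k ≤ 2) {f : σ → MvPolynomial σ A}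
    (hf : memFtilde' k f) : Subsingleton (σ → MvPolynomial σ A) := by
  rcases isEmpty_or_nonempty σ with hσ | ⟨⟨i⟩⟩
  · infer_instance
  have hhom : (f i).IsHomogeneous (k - 1) := by
    intro d hd
    have hpos : d ≠ 0 := by rintro rfl; exact hd (hf.1 i).1
    have hle : d.degree ≤ k - 1 := (le_totalDegree (mem_support_iff.mpr hd)).trans (hf.1 i).2
    have := (Finsupp.degree_eq_zero_iff d).not.mpr hpos
    have hweight : Finsupp.weight 1 d = d.degree := by rw [Finsupp.degree_eq_weight_one]; rfl
    omega
  have hX : (X i : MvPolynomial σ A) = 0 := by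
    rw [← hf.2 i, homogeneousComponent_eq_self hhom, sub_self]
  have : Subsingleton A := by
    by_contra hA
    rw [not_subsingleton_iff_nontrivial] at hA
    exact X_ne_zero i hX
  have : Subsingleton (MvPolynomial σ A) := Module.subsingleton A _
  infer_instance

end Composition

theorem lemma_6_10_3_general (A : Type*) [CommRing A] (n k : ℕ)
    (f g h : Fin (n - 1) → MvPolynomial (Fin (n - 1)) A)
    (hf : memFtilde' k f) (hg : memFtilde k g) (hh : memFtilde k h)
    (hhg : ∀ i, polyComp k h g i = MvPolynomial.X i) :
    (∀ i, piTop k (polyComp k h (polyComp k f g)) i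
        = MvPolynomial.bind₁
            (fun j => MvPolynomial.bind₁ (chiLin g) (piTop k f j)) (chiLin h i))
    ∧ memFtilde' k (polyComp k h (polyComp k f g)) := by
  rcases le_or_gt k 2 with hk | hk
  · have := subsingleton_of_memFtilde' hk hf
    exact ⟨congrFun (Subsingleton.elim (piTop k _) fun i => bind₁ _ (chiLin h i)),
      Subsingleton.elim f (polyComp k h (polyComp k f g)) ▸ hf⟩
  have hB (j) : (bind₁ (chiLin g) (piTop k f j)).IsHomogeneous (k - 1) :=
    (homogeneousComponent_isHomogeneous _ _).bind₁_chiLin g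
  have hQ := isHomogeneous_bind₁_chiLin_apply hB h
  have hcomp : polyComp k h (polyComp k f g)
      = X + fun i => bind₁ (fun j => bind₁ (chiLin g) (piTop k f j)) (chiLin h i) := by
    rw [polyComp_eq_add_bind₁_piTop (by omega) hf hg,
      polyComp_add_of_isHomogeneous (by omega) (fun i => (hh i).1) (fun j => (hg j).1) hB]
    exact congrArg (· + _) (funext hhg)
  rw [hcomp]
  exact ⟨fun i => congrFun (piTop_X_add hk hQ) i, memFtilde'_X_add hk hQ⟩

/-- **Lemma 6.10(3) of the paper.** Let `f ∈ F̃'` and let `g, h ∈ F̃` satisfy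
`h∘g = (u_1,…,u_{n−1})` (composition modulo `I^k`).  Then
`π(h∘f∘g) = χ(h)∘π(f)∘χ(g)` (exact substitutions), and `h∘f∘g ∈ F̃'`. -/
theorem lemma_6_10_3 (A : Type*) [CommRing A] (n k : ℕ) (hn : 2 ≤ n) (hk : 2 ≤ k)
    (f g h : Fin (n - 1) → MvPolynomial (Fin (n - 1)) A)
    (hf : memFtilde' k f) (hg : memFtilde k g) (hh : memFtilde k h)
    (hhg : ∀ i, polyComp k h g i = MvPolynomial.X i) :
    (∀ i, piTop k (polyComp k h (polyComp k f g)) i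
        = MvPolynomial.bind₁
            (fun j => MvPolynomial.bind₁ (chiLin g) (piTop k f j)) (chiLin h i))
    ∧ memFtilde' k (polyComp k h (polyComp k f g)) :=
  lemma_6_10_3_general A n k f g h hf hg hh hhg
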